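/- arXiv:1002.4350 — 4 statements merged into one kernel-verified Lean document; each statement's English description precedes it below -/
import Mathlib

section
/- Let Γ be a connected multigraph with finite vertex set V. Then every generator c_v of the lattice Λ has coordinate sum zero, so that Λ is contained in Z = {d ∈ ℤ^V : Σ_v d(v) = 0}, and the degree class group Δ = Z/Λ is a finite abelian group. -/
open Finset

noncomputable section
open scoped Classical

variable {V : Type} [Fintype V] [DecidableEq V]

/-- The simple graph underlying a multigraph with multiplicity function `k`:
`u` and `v` are adjacent iff `u ≠ v` and some edge joins them. -/
def graphOf (k : V → V → ℕ) : SimpleGraph V where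
  Adj u v := u ≠ v ∧ (0 < k u v ∨ 0 < k v u)
  symm := ⟨fun u v h => ⟨h.1.symm, h.2.symm⟩⟩
  loopless := ⟨fun v h => h.1 rfl⟩

/-- The number of edges of a multigraph: loops plus half the ordered count. -/
def numEdges (k : V → V → ℕ) : ℕ :=
  (∑ v, k v v) + (∑ u, ∑ v ∈ Finset.univ.erase u, k u v) / 2

/-- The genus of a weighted graph: `∑ w(v) + b₁`, with `b₁ = #E - #V + 1`. -/
def genus (k : V → V → ℕ) (w : V → ℕ) : ℤ :=
  (∑ v, (w v : ℤ)) + ((numEdges k : ℤ) - (Fintype.card V : ℤ) + 1)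

/-- Stability: connected, and each weight-zero vertex has valency at least 3. -/
def IsStable (k : V → V → ℕ) (w : V → ℕ) : Prop :=
  (graphOf k).Connected ∧
    ∀ v, w v = 0 → 3 ≤ 2 * k v v + ∑ u ∈ Finset.univ.erase v, k u v

/-- `δ_A`: the number of edges joining `A` to its complement. -/
def deltaA (k : V → V → ℕ) (A : Finset V) : ℤ :=
  ∑ u ∈ A, ∑ v ∈ Aᶜ, (k u v : ℤ)

/-- `w_A = Σ_{v∈A} (2w(v) − 2 + 2k(v,v) + Σ_{u≠v} k(u,v))`. -/
def wA (k : V → V → ℕ) (w : V → ℕ) (A : Finset V) : ℤ :=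
  ∑ v ∈ A, (2 * (w v : ℤ) - 2 + 2 * (k v v : ℤ) + ∑ u ∈ Finset.univ.erase v, (k u v : ℤ))

/-- `d_A`: the total degree of a multidegree on the subset `A`. -/
def degA (d : V → ℤ) (A : Finset V) : ℤ := ∑ v ∈ A, d v

/-- `m_A(d) = d·w_A/(2g−2) − δ_A/2 ∈ ℚ`. -/
def mA (k : V → V → ℕ) (w : V → ℕ) (D : ℤ) (A : Finset V) : ℚ :=
  (D : ℚ) * (wA k w A : ℚ) / ((2 * genus k w - 2 : ℤ) : ℚ) - (deltaA k A : ℚ) / 2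

/-- A balanced multidegree of total degree `D`. -/
def IsBalanced (k : V → V → ℕ) (w : V → ℕ) (D : ℤ) (d : V → ℤ) : Prop :=
  degA d Finset.univ = D ∧ ∀ A : Finset V, mA k w D A ≤ (degA d A : ℚ)

/-- A strictly balanced multidegree of total degree `D`. -/
def IsStrictlyBalanced (k : V → V → ℕ) (w : V → ℕ) (D : ℤ) (d : V → ℤ) : Prop :=
  IsBalanced k w D d ∧
    ∀ A : Finset V, A ≠ ∅ → A ≠ Finset.univ → mA k w D A < (degA d A : ℚ)

/-- `(Γ,w)` is `d`-general if every balanced multidegree of total degree `d`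
is strictly balanced. -/
def IsDGeneral (k : V → V → ℕ) (w : V → ℕ) (D : ℤ) : Prop :=
  ∀ d : V → ℤ, IsBalanced k w D d → IsStrictlyBalanced k w D d

/-- The generator `c_v` of the lattice `Λ`. -/
def cvec (k : V → V → ℕ) (v : V) : V → ℤ := fun u =>
  if u = v then -(∑ x ∈ Finset.univ.erase v, (k x v : ℤ)) else (k u v : ℤ)

/-- The lattice `Λ ⊆ ℤ^V` generated by the `c_v`. -/
def Lambda (k : V → V → ℕ) : AddSubgroup (V → ℤ) :=
  AddSubgroup.closure (Set.range (cvec k))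

/-- The total-degree homomorphism `ℤ^V → ℤ`. -/
def sumHom (V : Type) [Fintype V] : (V → ℤ) →+ ℤ :=
  { toFun := fun d => ∑ v, d v
    map_zero' := by simp
    map_add' := fun a b => by simp [Finset.sum_add_distrib] }

/-- `Z = {d ∈ ℤ^V : Σ_v d(v) = 0}`. -/
def Zsub (V : Type) [Fintype V] : AddSubgroup (V → ℤ) := (sumHom V).ker

/-- Remove the edge(s) joining `a` and `b` from the multigraph. -/
def removeEdge (k : V → V → ℕ) (a b : V) : V → V → ℕ := fun u v =>
  if (u = a ∧ v = b) ∨ (u = b ∧ v = a) then 0 else k u v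

/-- `a`–`b` is a bridge: a single non-loop edge whose removal disconnects the graph. -/
def IsBridge (k : V → V → ℕ) (a b : V) : Prop :=
  a ≠ b ∧ k a b = 1 ∧ ¬ (graphOf (removeEdge k a b)).Connected

/-- `A` induces a connected sub-multigraph. -/
def IsConnectedSubset (k : V → V → ℕ) (A : Finset V) : Prop :=
  ((graphOf k).induce (A : Set V)).Connected

/-- The equivalence relation `≈` on `V` generated by bridges. -/
def contractSetoid (k : V → V → ℕ) : Setoid V :=
  ⟨Relation.EqvGen (fun u v => IsBridge k u v), Relation.EqvGen.is_equivalence _⟩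

/-- The vertex set `V² = V/≈` of the contracted graph `Γ²`. -/
def V2 (k : V → V → ℕ) : Type := Quotient (contractSetoid k)

instance (k : V → V → ℕ) : Finite (V2 k) := Quotient.finite _

instance (k : V → V → ℕ) : Fintype (V2 k) := Fintype.ofFinite _

/-- The fiber of the quotient map `φ : V → V²` over a class `c`. -/
def fiber (k : V → V → ℕ) (c : V2 k) : Finset V :=
  Finset.univ.filter (fun v => Quotient.mk (contractSetoid k) v = c)

/-- The multiplicity function `k²` of the contracted graph `Γ²`. -/
def k2 (k : V → V → ℕ) : V2 k → V2 k → ℕ := fun c c' =>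
  if c = c' then
    (∑ v ∈ fiber k c, k v v) +
      (∑ u ∈ fiber k c, ∑ v ∈ (fiber k c).erase u,
        if IsBridge k u v then 0 else k u v) / 2
  else ∑ u ∈ fiber k c, ∑ v ∈ fiber k c', k u v

/-- The weight function `w²` of the contracted weighted graph `(Γ²,w²)`. -/
def w2 (k : V → V → ℕ) (w : V → ℕ) : V2 k → ℕ := fun c => ∑ v ∈ fiber k c, w v

/-- The pushforward `α(d)` of a multidegree to the contracted graph. -/
def alphaMap (k : V → V → ℕ) (d : V → ℤ) : V2 k → ℤ := fun c => ∑ v ∈ fiber k c, d v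

/-- The setoid on multidegrees of total degree `D`: two are equivalent if their
difference lies in `Λ`; the quotient is `Δ^d`. -/
def degSetoid (k : V → V → ℕ) (D : ℤ) : Setoid {d : V → ℤ // (∑ v, d v) = D} :=
  ⟨fun a b => (a : V → ℤ) - (b : V → ℤ) ∈ Lambda k, by
    constructor
    · intro a; simpa using (Lambda k).zero_mem
    · intro a b h; have h2 := (Lambda k).neg_mem h; rwa [neg_sub] at h2
    · intro a b c h1 h2
      have h3 := (Lambda k).add_mem h1 h2
      rwa [sub_add_sub_cancel] at h3⟩

/-- Number of edges of the sub-multigraph induced on `A`. -/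
def numEdgesIn (k : V → V → ℕ) (A : Finset V) : ℕ :=
  (∑ v ∈ A, k v v) + (∑ u ∈ A, ∑ v ∈ A.erase u, k u v) / 2

/-- Blow-up of a multigraph at the single bridge `a`–`b`: one exceptional
vertex is inserted in the middle of the bridge. -/
def blowK (k : V → V → ℕ) (a b : V) : (V ⊕ Unit) → (V ⊕ Unit) → ℕ
  | Sum.inl u, Sum.inl v => if (u = a ∧ v = b) ∨ (u = b ∧ v = a) then 0 else k u v
  | Sum.inl u, Sum.inr _ => if u = a ∨ u = b then 1 else 0
  | Sum.inr _, Sum.inl v => if v = a ∨ v = b then 1 else 0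
  | Sum.inr _, Sum.inr _ => 0

/-- Weight function of the blow-up at one bridge: exceptional vertex has weight 0. -/
def blowW (w : V → ℕ) : V ⊕ Unit → ℕ
  | Sum.inl v => w v
  | Sum.inr _ => 0

/-- Blow-up of a multigraph at a set `S` of bridges (given as ordered pairs):
one exceptional vertex is inserted in the middle of each bridge of `S`. -/
def blowKS (k : V → V → ℕ) (S : Finset (V × V)) :
    (V ⊕ {p : V × V // p ∈ S}) → (V ⊕ {p : V × V // p ∈ S}) → ℕ
  | Sum.inl u, Sum.inl v => if (u, v) ∈ S ∨ (v, u) ∈ S then 0 else k u v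
  | Sum.inl u, Sum.inr e => if u = e.1.1 ∨ u = e.1.2 then 1 else 0
  | Sum.inr e, Sum.inl v => if v = e.1.1 ∨ v = e.1.2 then 1 else 0
  | Sum.inr _, Sum.inr _ => 0

/-- Weight function of the blow-up at a set of bridges. -/
def blowWS (w : V → ℕ) (S : Finset (V × V)) : (V ⊕ {p : V × V // p ∈ S}) → ℕ
  | Sum.inl v => w v
  | Sum.inr _ => 0

/-- Strictly balanced multidegree of total degree `D` on the blow-up `Γ̂_S`:
balanced (with degree 1 on each exceptional vertex), and the inequality is
strict for every proper nonempty `A` such that some edge between `A` and its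
complement has no exceptional endpoint. -/
def IsStrictlyBalancedBlowS (k : V → V → ℕ) (w : V → ℕ) (S : Finset (V × V)) (D : ℤ)
    (dh : (V ⊕ {p : V × V // p ∈ S}) → ℤ) : Prop :=
  IsBalanced (blowKS k S) (blowWS w S) D dh ∧
    (∀ e : {p : V × V // p ∈ S}, dh (Sum.inr e) = 1) ∧
    ∀ A : Finset (V ⊕ {p : V × V // p ∈ S}), A ≠ ∅ → A ≠ Finset.univ →
      (∃ u v : V, Sum.inl u ∈ A ∧ Sum.inl v ∉ A ∧ 0 < blowKS k S (Sum.inl u) (Sum.inl v)) →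
      mA (blowKS k S) (blowWS w S) D A < (degA dh A : ℚ)

/-- Multiplicity function of the vine graph: two vertices joined by `δ` edges,
no loops. -/
def vineK (δ : ℕ) : Fin 2 → Fin 2 → ℕ := fun u v => if u = v then 0 else δ

/-- Weight function of the vine graph with weights `g₁, g₂`. -/
def vineW (g1 g2 : ℕ) : Fin 2 → ℕ := fun v => if v = 0 then g1 else g2

/-- The data of a stable vine graph of genus `g` with weights `g₁, g₂` and `δ` edges. -/
def StableVine (g : ℤ) (g1 g2 δ : ℕ) : Prop :=
  2 ≤ δ ∧ ((g1 = 0 ∨ g2 = 0) → 3 ≤ δ) ∧ (g1 : ℤ) + (g2 : ℤ) + (δ : ℤ) - 1 = g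

/-!
The coordinate sums of the `c_v` vanish because `c_v(v)` is minus the sum of the other
coordinates. For finiteness, `Z` is finitely generated, so it suffices that `Z/Λ` is torsion,
i.e. that `Λ` spans `Z ⊗ ℚ`. By symmetry of `k` the matrix `(c_v(u))` is symmetric, so its
kernel consists of the functions `x` with `∑_u k(u,v) (x_u - x_v) = 0` for all `v`; at a maximum
of `x` all these terms are `≤ 0`, hence vanish, so by connectedness `x` is constant. The kernel is
therefore one-dimensional, and `Λ ⊗ ℚ`, which lies in the hyperplane `Z ⊗ ℚ`, fills it.
-/

section Generators

variable (k : V → V → ℕ)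

lemma cvec_self (v : V) : cvec k v v = -∑ u ∈ univ.erase v, (k u v : ℤ) := if_pos rfl

lemma cvec_of_ne {u v : V} (h : u ≠ v) : cvec k v u = k u v := if_neg h

lemma sum_cvec (v : V) : ∑ u, cvec k v u = 0 := by
  rw [← add_sum_erase _ _ (mem_univ v), cvec_self,
    sum_congr rfl fun u hu => cvec_of_ne k (ne_of_mem_erase hu), neg_add_cancel]

lemma Lambda_le_Zsub : Lambda k ≤ Zsub V :=
  (AddSubgroup.closure_le _).mpr <| Set.range_subset_iff.mpr (sum_cvec k)

lemma cvec_comm (hsym : ∀ u v, k u v = k v u) (u v : V) : cvec k u v = cvec k v u := by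
  obtain rfl | h := eq_or_ne u v
  · rfl
  · rw [cvec_of_ne k h.symm, cvec_of_ne k h, hsym]

lemma sum_mul_cvec {R : Type*} [CommRing R] (x : V → R) (v : V) :
    ∑ u, x u * cvec k v u = ∑ u ∈ univ.erase v, (k u v : R) * (x u - x v) := by
  have hoff :
      ∑ u ∈ univ.erase v, x u * cvec k v u = ∑ u ∈ univ.erase v, (k u v : R) * x u :=
    sum_congr rfl fun u hu => by
      rw [cvec_of_ne k (ne_of_mem_erase hu), Int.cast_natCast, mul_comm]
  rw [← add_sum_erase _ _ (mem_univ v), hoff, cvec_self, sum_congr rfl fun u _ => mul_sub _ _ _,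
    sum_sub_distrib, ← sum_mul]
  push_cast
  ring

end Generators

section MaximumPrinciple

variable (k : V → V → ℕ) {R : Type*} [CommRing R] [LinearOrder R] [IsStrictOrderedRing R]

lemma eq_of_sum_mul_cvec_eq_zero_of_le {x : V → R} {v : V} (hmax : ∀ u, x u ≤ x v)
    (hv : ∑ u, x u * cvec k v u = 0) {u : V} (huv : u ≠ v) (hk : 0 < k u v) : x u = x v := by
  have hterm : ∀ w ∈ univ.erase v, (k w v : R) * (x w - x v) ≤ 0 := fun w _ =>
    mul_nonpos_of_nonneg_of_nonpos (Nat.cast_nonneg _) (sub_nonpos.mpr (hmax w))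
  rw [sum_mul_cvec] at hv
  have hzero := (sum_eq_zero_iff_of_nonpos hterm).mp hv u (mem_erase.mpr ⟨huv, mem_univ u⟩)
  have hk' : (k u v : R) ≠ 0 := by exact_mod_cast hk.ne'
  exact sub_eq_zero.mp ((mul_eq_zero.mp hzero).resolve_left hk')

theorem eq_of_forall_sum_mul_cvec_eq_zero (hsym : ∀ u v, k u v = k v u)
    (hconn : (graphOf k).Connected) {x : V → R} (hx : ∀ v, ∑ u, x u * cvec k v u = 0)
    (u v : V) : x u = x v := by
  obtain ⟨m, -, hm⟩ := exists_max_image univ x (univ_nonempty_iff.mpr hconn.nonempty)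
  have hstep : ∀ a b, (graphOf k).Adj a b → x a = x m → x b = x m := by
    rintro a b ⟨hab, hk⟩ ha
    have hk' : 0 < k b a := hk.elim (fun h => hsym a b ▸ h) id
    rw [eq_of_sum_mul_cvec_eq_zero_of_le k (fun w => ha ▸ hm w (mem_univ w)) (hx a) hab.symm hk',
      ha]
  have hwalk : ∀ {a b} (_ : (graphOf k).Walk a b), x a = x m → x b = x m := by
    intro a b p
    induction p with
    | nil => exact id
    | cons h _ ih => exact fun ha => ih (hstep _ _ h ha)
  rw [hwalk (hconn.preconnected m u).some rfl, hwalk (hconn.preconnected m v).some rfl]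

end MaximumPrinciple

section RationalVectors

variable {ι : Type*}

def ratVec : (ι → ℤ) →ₗ[ℤ] (ι → ℚ) := (Algebra.linearMap ℤ ℚ).compLeft ι

lemma ratVec_apply (d : ι → ℤ) (i : ι) : ratVec d i = d i := rfl

lemma ratVec_injective : Function.Injective (ratVec (ι := ι)) :=
  fun _ _ h => funext fun i => Int.cast_injective (congrFun h i)

variable [Fintype ι]

def sumQ : Module.Dual ℚ (ι → ℚ) := ∑ i, LinearMap.proj i

lemma sumQ_apply (x : ι → ℚ) : sumQ x = ∑ i, x i := by
  simp [sumQ]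

lemma sumQ_ratVec (d : ι → ℤ) : sumQ (ratVec d) = ∑ i, d i := by
  simp [sumQ_apply, ratVec_apply]

end RationalVectors

section RationalSpan

variable (k : V → V → ℕ)

theorem span_ratVec_cvec (hsym : ∀ u v, k u v = k v u) (hconn : (graphOf k).Connected) :
    Submodule.span ℚ (Set.range fun v => ratVec (cvec k v)) = LinearMap.ker sumQ := by
  have hV : Nonempty V := hconn.nonempty
  have m : V := hV.some
  rw [← Fintype.range_linearCombination]
  set L := Fintype.linearCombination ℚ fun v => ratVec (cvec k v)
  have hle : LinearMap.range L ≤ LinearMap.ker sumQ := by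
    rw [Fintype.range_linearCombination, Submodule.span_le, Set.range_subset_iff]
    intro v
    simp [sumQ_ratVec, sum_cvec]
  have hker : LinearMap.ker L ≤ ℚ ∙ 1 := by
    intro x hx
    have hharm : ∀ u, ∑ v, x v * cvec k u v = 0 := fun u => by
      simpa [L, Fintype.linearCombination_apply, ratVec_apply, cvec_comm k hsym u, mul_comm]
        using congrFun hx u
    exact Submodule.mem_span_singleton.mpr
      ⟨x m, funext fun u => by simp [eq_of_forall_sum_mul_cvec_eq_zero k hsym hconn hharm u m]⟩
  have hσ : sumQ ≠ 0 := fun h => by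
    simpa [sumQ_apply] using LinearMap.congr_fun h (Pi.single m 1)
  have h1 := Module.Dual.finrank_ker_add_one_of_ne_zero hσ
  have h2 := LinearMap.finrank_range_add_finrank_ker L
  have h3 := (Submodule.finrank_mono hker).trans_eq (finrank_span_singleton one_ne_zero)
  exact Submodule.eq_of_le_of_finrank_le hle (by omega)

theorem exists_zsmul_mem_Lambda (hsym : ∀ u v, k u v = k v u) (hconn : (graphOf k).Connected)
    {d : V → ℤ} (hd : d ∈ Zsub V) : ∃ n : ℤ, n ≠ 0 ∧ n • d ∈ Lambda k := by
  have hdQ : ratVec d ∈ Submodule.span ℚ (Set.range fun v => ratVec (cvec k v)) := by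
    rw [span_ratVec_cvec k hsym hconn, LinearMap.mem_ker, sumQ_ratVec]
    exact Int.cast_eq_zero.mpr hd
  obtain ⟨t, ht⟩ := multiple_mem_span_of_mem_localization_span (nonZeroDivisors ℤ) ℚ _ _ hdQ
  refine ⟨t, nonZeroDivisors.coe_ne_zero t, ?_⟩
  rw [Lambda, ← Submodule.span_int_eq_addSubgroupClosure, Submodule.mem_toAddSubgroup,
    ← Submodule.comap_map_eq_of_injective ratVec_injective (Submodule.span ℤ _),
    Submodule.mem_comap, Submodule.map_span, ← Set.range_comp, LinearMap.map_smul]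
  exact ht

end RationalSpan

theorem isAddTorsion_Zsub_quotient_Lambda (k : V → V → ℕ) (hsym : ∀ u v, k u v = k v u)
    (hconn : (graphOf k).Connected) :
    IsAddTorsion (Zsub V ⧸ (Lambda k).addSubgroupOf (Zsub V)) := by
  intro q
  induction q using QuotientAddGroup.induction_on with
  | H d =>
    obtain ⟨n, hn, hnd⟩ := exists_zsmul_mem_Lambda k hsym hconn d.2
    refine isOfFinAddOrder_iff_zsmul_eq_zero.mpr ⟨n, hn, ?_⟩
    rw [← QuotientAddGroup.mk_zsmul, QuotientAddGroup.eq_zero_iff, AddSubgroup.mem_addSubgroupOf]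
    exact hnd

instance (V : Type) [Fintype V] : AddGroup.FG (Zsub V) :=
  Module.Finite.iff_addGroup_fg.mp <|
    Module.Finite.of_injective (Zsub V).subtype.toIntLinearMap Subtype.val_injective

/-- For a connected multigraph, every generator `c_v` of `Λ` has
coordinate sum zero, `Λ ⊆ Z`, and the degree class group `Δ = Z/Λ` is finite. -/
theorem stmt0 (V : Type) [Fintype V] [DecidableEq V] (k : V → V → ℕ)
    (hsym : ∀ u v, k u v = k v u) (hconn : (graphOf k).Connected) :
    (∀ v, ∑ u, cvec k v u = 0) ∧ Lambda k ≤ Zsub V ∧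
      Finite (↥(Zsub V) ⧸ (Lambda k).addSubgroupOf (Zsub V)) :=
  ⟨sum_cvec k, Lambda_le_Zsub k,
    AddCommGroup.finite_of_fg_isAddTorsion _ (isAddTorsion_Zsub_quotient_Lambda k hsym hconn)⟩
end
end

section
/- Let (Γ,w) be a stable weighted graph of genus g ≥ 2 and let d be an integer. Then every equivalence class in Δ^d (multidegrees of total degree d modulo Λ) contains a balanced multidegree. -/
open Finset

noncomputable section
open scoped Classical

variable {V : Type} [Fintype V] [DecidableEq V]

/-!
The class of `d₀` modulo `Λ` is `{d₀ + L z | z ∈ ℤ^V}`, where `L` is the Laplacian of the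
multigraph. Consider the integer-valued potential
`Φ(z) = (2g - 2) E(z) + 4 ∑ᵥ (D w_{v} - (2g - 2) d₀(v)) z(v)`, with `E` the Dirichlet energy.
The coefficients of its linear part sum to zero because `w_V = 2g - 2`, so on a connected graph
the linear part is controlled by the differences of `z` along edges, hence by `√E`; thus `Φ` is
bounded below and attains its minimum. At a minimiser `z`, the move `z ↦ z - 𝟙_A` changes `Φ`
by twice the slack of the balancing inequality of `d₀ + L z` at `A`, so that slack is nonnegative.
-/

section DirichletEnergy

omit [DecidableEq V]

def laplacian (k : V → V → ℕ) (z : V → ℤ) : V → ℤ := fun u => ∑ v, (k u v : ℤ) * (z v - z u)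

def energy (k : V → V → ℕ) (z : V → ℤ) : ℤ := ∑ u, ∑ v, (k u v : ℤ) * (z u - z v) ^ 2

lemma sum_laplacian {k : V → V → ℕ} (hsym : ∀ u v, k u v = k v u) (z : V → ℤ) :
    ∑ u, laplacian k z u = 0 := by
  have hanti : ∑ u, laplacian k z u = -∑ u, laplacian k z u := by
    simp only [laplacian]
    conv_lhs => rw [sum_comm]
    rw [← sum_neg_distrib]
    exact sum_congr rfl fun v _ => by
      rw [← sum_neg_distrib]
      exact sum_congr rfl fun u _ => by rw [hsym]; ring
  linarith

lemma sum_sum_mul_sub_mul_sub {k : V → V → ℕ} (hsym : ∀ u v, k u v = k v u) (z y : V → ℤ) :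
    ∑ u, ∑ v, (k u v : ℤ) * (z u - z v) * (y u - y v) = -2 * ∑ u, y u * laplacian k z u := by
  have hswap : ∑ u, ∑ v, (k u v : ℤ) * (z u - z v) * y v = ∑ u, y u * laplacian k z u := by
    rw [sum_comm]
    simp only [laplacian, mul_sum]
    exact sum_congr rfl fun u _ => sum_congr rfl fun v _ => by rw [hsym]; ring
  have hdiag : ∑ u, ∑ v, (k u v : ℤ) * (z u - z v) * y u = -∑ u, y u * laplacian k z u := by
    simp only [laplacian, mul_sum, ← sum_neg_distrib]
    exact sum_congr rfl fun u _ => sum_congr rfl fun v _ => by ring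
  have hsplit : ∀ u v, (k u v : ℤ) * (z u - z v) * (y u - y v) =
      (k u v : ℤ) * (z u - z v) * y u - (k u v : ℤ) * (z u - z v) * y v := fun u v => mul_sub _ _ _
  simp only [hsplit, sum_sub_distrib, hswap, hdiag]
  ring

lemma energy_sub {k : V → V → ℕ} (hsym : ∀ u v, k u v = k v u) (z y : V → ℤ) :
    energy k (z - y) = energy k z + 4 * ∑ u, y u * laplacian k z u + energy k y := by
  have hexp : ∀ u v, (k u v : ℤ) * ((z - y) u - (z - y) v) ^ 2 = (k u v : ℤ) * (z u - z v) ^ 2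
      - 2 * ((k u v : ℤ) * (z u - z v) * (y u - y v)) + (k u v : ℤ) * (y u - y v) ^ 2 :=
    fun u v => by simp only [Pi.sub_apply]; ring
  simp only [energy, hexp, sum_add_distrib, sum_sub_distrib, ← mul_sum,
    sum_sum_mul_sub_mul_sub hsym]
  ring

lemma energy_nonneg (k : V → V → ℕ) (z : V → ℤ) : 0 ≤ energy k z :=
  sum_nonneg fun _ _ => sum_nonneg fun _ _ => by positivity

lemma sq_sub_le_energy (k : V → V → ℕ) (z : V → ℤ) {a b : V} (hab : 0 < k a b) :
    (z a - z b) ^ 2 ≤ energy k z :=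
  calc (z a - z b) ^ 2 ≤ (k a b : ℤ) * (z a - z b) ^ 2 :=
        le_mul_of_one_le_left (sq_nonneg _) (by exact_mod_cast hab)
    _ ≤ ∑ v, (k a v : ℤ) * (z a - z v) ^ 2 :=
        single_le_sum (f := fun v => (k a v : ℤ) * (z a - z v) ^ 2)
          (fun _ _ => by positivity) (mem_univ b)
    _ ≤ energy k z :=
        single_le_sum (f := fun u => ∑ v, (k u v : ℤ) * (z u - z v) ^ 2)
          (fun _ _ => sum_nonneg fun _ _ => by positivity) (mem_univ a)

lemma SimpleGraph.Walk.abs_sub_le_length_mul {α : Type*} {G : SimpleGraph α} (f : α → ℝ) {s : ℝ}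
    (hs : ∀ a b, G.Adj a b → |f a - f b| ≤ s) {u v : α} (p : G.Walk u v) :
    |f u - f v| ≤ p.length * s := by
  induction p with
  | nil => simp
  | @cons a b c hab p ih =>
    calc |f a - f c| ≤ |f a - f b| + |f b - f c| := abs_sub_le _ _ _
      _ ≤ s + p.length * s := add_le_add (hs a b hab) ih
      _ = (cons hab p).length * s := by rw [length_cons]; push_cast; ring

lemma SimpleGraph.Connected.abs_sub_le_card_mul {α : Type*} [Fintype α] {G : SimpleGraph α}
    (hG : G.Connected) (f : α → ℝ) {s : ℝ} (hs₀ : 0 ≤ s)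
    (hs : ∀ a b, G.Adj a b → |f a - f b| ≤ s) (u v : α) :
    |f u - f v| ≤ Fintype.card α * s := by
  obtain ⟨p, hp⟩ := hG.exists_isPath u v
  calc |f u - f v| ≤ p.length * s := p.abs_sub_le_length_mul f hs
    _ ≤ Fintype.card α * s := by gcongr; exact_mod_cast hp.length_lt.le

lemma exists_forall_le_energy_add {k : V → V → ℕ} (hsym : ∀ u v, k u v = k v u)
    (hconn : (graphOf k).Connected) (r : V → ℤ) (hr : ∑ v, r v = 0) :
    ∃ b : ℤ, ∀ z : V → ℤ, b ≤ energy k z + ∑ v, r v * z v := by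
  obtain ⟨v₀⟩ := hconn.nonempty
  set c : ℤ := Fintype.card V * ∑ v, |r v| with hc
  refine ⟨-c ^ 2, fun z => ?_⟩
  have hE : (0 : ℝ) ≤ energy k z := by exact_mod_cast energy_nonneg k z
  set s := √(energy k z : ℝ)
  have hedge : ∀ a b, (graphOf k).Adj a b → |(z a : ℝ) - z b| ≤ s := by
    rintro a b ⟨-, hab⟩
    have hk : 0 < k a b := hab.elim id fun h => hsym a b ▸ h
    exact Real.abs_le_sqrt (by exact_mod_cast sq_sub_le_energy k z hk)
  have hlin : |∑ v, (r v : ℝ) * z v| ≤ c * s := by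
    have hshift : ∑ v, (r v : ℝ) * z v = ∑ v, (r v : ℝ) * (z v - z v₀) := by
      simp only [mul_sub, sum_sub_distrib, ← sum_mul, ← Int.cast_sum, hr, Int.cast_zero,
        zero_mul, sub_zero]
    calc |∑ v, (r v : ℝ) * z v| ≤ ∑ v, |(r v : ℝ)| * |(z v : ℝ) - z v₀| := by
          rw [hshift]
          simpa only [abs_mul] using abs_sum_le_sum_abs (fun v => (r v : ℝ) * (z v - z v₀)) univ
      _ ≤ ∑ v, |(r v : ℝ)| * (Fintype.card V * s) := by
          gcongr with v
          exact hconn.abs_sub_le_card_mul _ (Real.sqrt_nonneg _) hedge v v₀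
      _ = c * s := by rw [← sum_mul, hc]; push_cast; ring
  have hs : s ^ 2 = energy k z := Real.sq_sqrt hE
  have hc₀ : (0 : ℝ) ≤ c := by rw [hc]; positivity
  have : (-c ^ 2 : ℝ) ≤ energy k z + ∑ v, (r v : ℝ) * z v := by
    nlinarith [(abs_le.mp hlin).1, sq_nonneg (s - c), Real.sqrt_nonneg (energy k z : ℝ)]
  exact_mod_cast this

end DirichletEnergy

lemma laplacian_eq_sum_zsmul_cvec {k : V → V → ℕ} (hsym : ∀ u v, k u v = k v u) (z : V → ℤ) :
    laplacian k z = ∑ v, z v • cvec k v := by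
  funext u
  have hoff : ∀ v ∈ univ.erase u, (z v • cvec k v) u = (k u v : ℤ) * z v := fun v hv => by
    simp [cvec, Ne.symm (ne_of_mem_erase hv), mul_comm]
  rw [Finset.sum_apply, ← add_sum_erase _ _ (mem_univ u), sum_congr rfl hoff, laplacian,
    ← add_sum_erase _ _ (mem_univ u)]
  simp only [cvec, Pi.smul_apply, smul_eq_mul, if_pos, sub_self, mul_zero, zero_add, mul_sub,
    sum_sub_distrib, ← sum_mul]
  simp_rw [hsym _ u]
  ring

lemma laplacian_mem_Lambda {k : V → V → ℕ} (hsym : ∀ u v, k u v = k v u) (z : V → ℤ) :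
    laplacian k z ∈ Lambda k := by
  rw [laplacian_eq_sum_zsmul_cvec hsym]
  exact sum_mem fun v _ => zsmul_mem (AddSubgroup.subset_closure (Set.mem_range_self v)) _

lemma energy_indicator {k : V → V → ℕ} (hsym : ∀ u v, k u v = k v u) (A : Finset V) :
    energy k (fun u => if u ∈ A then 1 else 0) = 2 * deltaA k A := by
  have hterm : ∀ u v, (k u v : ℤ) * ((if u ∈ A then 1 else 0) - (if v ∈ A then 1 else 0)) ^ 2 =
      (if u ∈ A then (if v ∈ Aᶜ then (k u v : ℤ) else 0) else 0) +
        (if v ∈ A then (if u ∈ Aᶜ then (k v u : ℤ) else 0) else 0) :=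
    fun u v => by
      by_cases hu : u ∈ A <;> by_cases hv : v ∈ A <;> simp [hu, hv, hsym u v]
  simp only [energy, hterm, sum_add_distrib]
  rw [sum_comm (f := fun u v => if v ∈ A then (if u ∈ Aᶜ then (k v u : ℤ) else 0) else 0)]
  simp only [sum_ite_irrel, sum_const_zero, Fintype.sum_ite_mem, deltaA]
  ring

def canonicalDegree (k : V → V → ℕ) (w : V → ℕ) (v : V) : ℤ :=
  2 * (w v : ℤ) - 2 + 2 * (k v v : ℤ) + ∑ u ∈ univ.erase v, (k u v : ℤ)

lemma wA_eq_sum_canonicalDegree (k : V → V → ℕ) (w : V → ℕ) (A : Finset V) :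
    wA k w A = ∑ v ∈ A, canonicalDegree k w v := rfl

lemma even_sum_sum_erase {k : V → V → ℕ} (hsym : ∀ u v, k u v = k v u) :
    Even (∑ u, ∑ v ∈ univ.erase u, k u v) := by
  rw [← ZMod.natCast_eq_zero_iff_even, Finset.sum_sigma']
  push_cast
  refine Finset.sum_involution (fun p _ => ⟨p.2, p.1⟩) ?_ ?_ ?_ ?_
  · rintro ⟨u, v⟩ _
    rw [hsym v u, ← two_mul]
    exact zero_mul _
  · rintro ⟨u, v⟩ huv _ h
    simp only [mem_sigma, mem_univ, mem_erase, true_and] at huv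
    exact huv.1 (Sigma.mk.inj_iff.1 h).1
  · rintro ⟨u, v⟩ huv
    simp only [mem_sigma, mem_univ, mem_erase, true_and] at huv ⊢
    exact ⟨huv.1.symm, trivial⟩
  · intros; rfl

lemma wA_univ {k : V → V → ℕ} (hsym : ∀ u v, k u v = k v u) (w : V → ℕ) :
    wA k w univ = 2 * genus k w - 2 := by
  obtain ⟨T, hT⟩ := even_sum_sum_erase hsym
  have hswap : ∑ v, ∑ u ∈ univ.erase v, (k u v : ℤ) = ((T + T : ℕ) : ℤ) := by
    rw [← hT]; push_cast
    exact Finset.sum_congr rfl fun v _ => Finset.sum_congr rfl fun u _ => by rw [hsym]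
  simp only [wA, genus, numEdges, hT, Finset.sum_add_distrib, Finset.sum_sub_distrib, hswap,
    ← Finset.mul_sum]
  push_cast
  simp only [sum_const, card_univ, nsmul_eq_mul]
  omega

lemma mA_le_degA_iff {k : V → V → ℕ} {w : V → ℕ} (hM : 0 < 2 * genus k w - 2) (D : ℤ)
    (d : V → ℤ) (A : Finset V) :
    mA k w D A ≤ degA d A ↔ 2 * D * wA k w A ≤ (2 * genus k w - 2) * (2 * degA d A + deltaA k A) := by
  have hMℚ : (0 : ℚ) < ((2 * genus k w - 2 : ℤ) : ℚ) := by exact_mod_cast hM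
  rw [mA, sub_le_iff_le_add, div_le_iff₀ hMℚ, ← Int.cast_le (R := ℚ)]
  push_cast
  constructor <;> intro h <;> linarith

lemma exists_forall_le_of_bddBelow_range {α : Type*} [Nonempty α] {f : α → ℤ}
    (hf : BddBelow (Set.range f)) : ∃ x, ∀ y, f x ≤ f y := by
  obtain ⟨x, hx⟩ := Int.csInf_mem (Set.range_nonempty f) hf
  exact ⟨x, fun y => hx ▸ csInf_le hf (Set.mem_range_self y)⟩

def balancingPotential (k : V → V → ℕ) (w : V → ℕ) (D : ℤ) (d₀ z : V → ℤ) : ℤ :=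
  (2 * genus k w - 2) * energy k z +
    ∑ v, 4 * (D * canonicalDegree k w v - (2 * genus k w - 2) * d₀ v) * z v

lemma balancingPotential_sub_indicator {k : V → V → ℕ} (hsym : ∀ u v, k u v = k v u)
    (w : V → ℕ) (D : ℤ) (d₀ z : V → ℤ) (A : Finset V) :
    balancingPotential k w D d₀ (z - fun u => if u ∈ A then 1 else 0) =
      balancingPotential k w D d₀ z + 2 * ((2 * genus k w - 2) *
        (2 * degA (d₀ + laplacian k z) A + deltaA k A) - 2 * D * wA k w A) := by
  simp only [balancingPotential, energy_sub hsym, energy_indicator hsym, Pi.sub_apply, mul_sub,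
    sum_sub_distrib, mul_ite, mul_one, mul_zero, ite_mul, one_mul, zero_mul, Fintype.sum_ite_mem,
    degA, Pi.add_apply, sum_add_distrib, wA_eq_sum_canonicalDegree, ← mul_sum]
  ring

lemma isBalanced_of_forall_balancingPotential_le {k : V → V → ℕ} (hsym : ∀ u v, k u v = k v u)
    {w : V → ℕ} (hM : 0 < 2 * genus k w - 2) {D : ℤ} {d₀ z : V → ℤ}
    (h₀ : degA d₀ univ = D)
    (hmin : ∀ z', balancingPotential k w D d₀ z ≤ balancingPotential k w D d₀ z') :
    IsBalanced k w D (d₀ + laplacian k z) := by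
  refine ⟨?_, fun A => (mA_le_degA_iff hM D _ A).2 ?_⟩
  · simpa only [degA, Pi.add_apply, sum_add_distrib, sum_laplacian hsym, add_zero] using h₀
  · have := hmin (z - fun u => if u ∈ A then 1 else 0)
    rw [balancingPotential_sub_indicator hsym] at this
    linarith

lemma bddBelow_range_balancingPotential {k : V → V → ℕ} (hsym : ∀ u v, k u v = k v u)
    (hconn : (graphOf k).Connected) {w : V → ℕ} (hM : 0 < 2 * genus k w - 2) {D : ℤ}
    {d₀ : V → ℤ} (h₀ : degA d₀ univ = D) :
    BddBelow (Set.range (balancingPotential k w D d₀)) := by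
  set r : V → ℤ := fun v => 4 * (D * canonicalDegree k w v - (2 * genus k w - 2) * d₀ v)
  have hr : ∑ v, r v = 0 := by
    simp only [r, ← mul_sum, sum_sub_distrib, ← wA_eq_sum_canonicalDegree, wA_univ hsym]
    rw [← degA, h₀]
    ring
  obtain ⟨b, hb⟩ := exists_forall_le_energy_add hsym hconn r hr
  refine ⟨b, Set.forall_mem_range.2 fun z => (hb z).trans ?_⟩
  exact add_le_add_left (le_mul_of_one_le_left (energy_nonneg k z) hM) _

/-- On a stable weighted graph of genus `g ≥ 2`, every equivalence
class of multidegrees of total degree `D` modulo `Λ` contains a balanced one. -/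
theorem stmt2 (V : Type) [Fintype V] [DecidableEq V] (k : V → V → ℕ) (w : V → ℕ)
    (hsym : ∀ u v, k u v = k v u) (hstab : IsStable k w) (hg : 2 ≤ genus k w)
    (D : ℤ) (d0 : V → ℤ) (h0 : degA d0 Finset.univ = D) :
    ∃ d : V → ℤ, IsBalanced k w D d ∧ d - d0 ∈ Lambda k := by
  have hM : 0 < 2 * genus k w - 2 := by linarith
  obtain ⟨z, hz⟩ :=
    exists_forall_le_of_bddBelow_range (bddBelow_range_balancingPotential hsym hstab.1 hM h0)
  exact ⟨d0 + laplacian k z, isBalanced_of_forall_balancingPotential_le hsym hM h0 hz,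
    by simpa using laplacian_mem_Lambda hsym z⟩
end
end

section
/- Let (Γ,w) be a connected weighted graph of genus g ≥ 2 and d a multidegree of total degree d. If d_A ≥ m_A(d) for every subset A ⊆ V whose induced sub-multigraph is connected, then d_A ≥ m_A(d) for every subset A ⊆ V; that is, d is balanced. -/
open Finset

noncomputable section
open scoped Classical

variable {V : Type} [Fintype V] [DecidableEq V]

/-!
If a nonempty set `A` of vertices does not induce a connected subgraph, it splits into two
nonempty parts `B` and `A \ B` with no edge between them. Across such a split `w_A`, `δ_A` and
`d_A` are all additive, hence so are both sides of the balancing inequality `m_A(d) ≤ d_A`, and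
strong induction on `A` reduces the inequality to connected subsets.
-/

namespace SimpleGraph

variable {α : Type*} [DecidableEq α]

theorem exists_ssubset_forall_not_adj_of_not_connected_induce (G : SimpleGraph α)
    {A : Finset α} (hA : A.Nonempty) (hAconn : ¬ (G.induce (A : Set α)).Connected) :
    ∃ B ⊂ A, B.Nonempty ∧ ∀ u ∈ B, ∀ v ∈ A \ B, ¬ G.Adj u v := by
  have : Nonempty (A : Set α) := hA.coe_sort
  obtain ⟨x, y, hxy⟩ : ∃ x y, ¬ (G.induce (A : Set α)).Reachable x y := by
    by_contra! h
    exact hAconn ⟨h⟩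
  set B := A.filter fun v => ∃ hv : v ∈ A, (G.induce (A : Set α)).Reachable x ⟨v, hv⟩
  have hxB : x.1 ∈ B := mem_filter.2 ⟨x.2, x.2, Reachable.refl x⟩
  have hyB : y.1 ∉ B := fun hy => hxy (by obtain ⟨_, _, h⟩ := mem_filter.1 hy; exact h)
  refine ⟨B, (filter_subset _ _).ssubset_of_not_superset fun h => hyB (h y.2), ⟨x, hxB⟩, ?_⟩
  intro u hu v hv huv
  obtain ⟨huA, _, hxu⟩ := mem_filter.1 hu
  obtain ⟨hvA, hvB⟩ := mem_sdiff.1 hv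
  have hadj : (G.induce (A : Set α)).Adj ⟨u, huA⟩ ⟨v, hvA⟩ := induce_adj.2 huv
  exact hvB (mem_filter.2 ⟨hvA, hvA, hxu.trans hadj.reachable⟩)

end SimpleGraph

theorem eq_zero_of_not_adj_graphOf {V : Type} {k : V → V → ℕ} {u v : V} (huv : u ≠ v)
    (h : ¬ (graphOf k).Adj u v) : k u v = 0 := by
  simp only [graphOf, not_and, not_or, not_lt, nonpos_iff_eq_zero] at h
  exact (h huv).1

theorem deltaA_eq_add_of_disjoint (k : V → V → ℕ) {B C : Finset V} (h : Disjoint B C) :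
    deltaA k B = ∑ u ∈ B, ∑ v ∈ (B ∪ C)ᶜ, (k u v : ℤ) + ∑ u ∈ B, ∑ v ∈ C, (k u v : ℤ) := by
  rw [← sum_add_distrib]
  refine sum_congr rfl fun u _ => ?_
  rw [compl_union, ← sdiff_eq_inter_compl, sum_sdiff (subset_compl_iff_disjoint_left.2 h)]

theorem sum_sum_eq_zero_of_forall_not_adj {V : Type} (k : V → V → ℕ) {B C : Finset V}
    (h : Disjoint B C) (hsep : ∀ u ∈ B, ∀ v ∈ C, ¬ (graphOf k).Adj u v) :
    ∑ u ∈ B, ∑ v ∈ C, (k u v : ℤ) = 0 :=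
  sum_eq_zero fun u hu => sum_eq_zero fun v hv => by
    rw [eq_zero_of_not_adj_graphOf (h.forall_ne_finset hu hv) (hsep u hu v hv), Nat.cast_zero]

theorem deltaA_union_of_forall_not_adj (k : V → V → ℕ) {B C : Finset V} (h : Disjoint B C)
    (hsep : ∀ u ∈ B, ∀ v ∈ C, ¬ (graphOf k).Adj u v) :
    deltaA k (B ∪ C) = deltaA k B + deltaA k C := by
  have hsep' : ∀ u ∈ C, ∀ v ∈ B, ¬ (graphOf k).Adj u v :=
    fun u hu v hv huv => hsep v hv u hu huv.symm
  rw [deltaA_eq_add_of_disjoint k h, deltaA_eq_add_of_disjoint k h.symm, union_comm C B,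
    sum_sum_eq_zero_of_forall_not_adj k h hsep, sum_sum_eq_zero_of_forall_not_adj k h.symm hsep',
    deltaA, sum_union h, add_zero, add_zero]

theorem mA_union_of_forall_not_adj (k : V → V → ℕ) (w : V → ℕ) (D : ℤ) {B C : Finset V}
    (h : Disjoint B C) (hsep : ∀ u ∈ B, ∀ v ∈ C, ¬ (graphOf k).Adj u v) :
    mA k w D (B ∪ C) = mA k w D B + mA k w D C := by
  have hw : wA k w (B ∪ C) = wA k w B + wA k w C := sum_union h
  rw [mA, mA, mA, hw, deltaA_union_of_forall_not_adj k h hsep]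
  push_cast
  ring

theorem degA_union {V : Type} [DecidableEq V] (d : V → ℤ) {B C : Finset V} (h : Disjoint B C) :
    degA d (B ∪ C) = degA d B + degA d C :=
  sum_union h

theorem stmt5_general (V : Type) [Fintype V] [DecidableEq V] (k : V → V → ℕ) (w : V → ℕ)
    (D : ℤ) (d : V → ℤ) (hdeg : degA d Finset.univ = D)
    (hcon : ∀ A : Finset V, IsConnectedSubset k A → mA k w D A ≤ (degA d A : ℚ)) :
    IsBalanced k w D d := by
  refine ⟨hdeg, fun A => ?_⟩
  induction A using Finset.strongInduction with
  | _ A ih =>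
    rcases A.eq_empty_or_nonempty with rfl | hA
    · simp [mA, wA, deltaA, degA]
    by_cases hAconn : IsConnectedSubset k A
    · exact hcon A hAconn
    obtain ⟨B, hBA, hB, hsep⟩ :=
      (graphOf k).exists_ssubset_forall_not_adj_of_not_connected_induce hA hAconn
    rw [← union_sdiff_of_subset hBA.le, mA_union_of_forall_not_adj k w D disjoint_sdiff hsep,
      degA_union d disjoint_sdiff, Int.cast_add]
    exact add_le_add (ih B hBA) (ih (A \ B) (sdiff_ssubset hBA.le hB))

/-- If the balancing inequality holds for every connected subset,
then it holds for every subset, i.e. the multidegree is balanced. -/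
theorem stmt5 (V : Type) [Fintype V] [DecidableEq V] (k : V → V → ℕ) (w : V → ℕ)
    (hsym : ∀ u v, k u v = k v u) (hconn : (graphOf k).Connected)
    (hg : 2 ≤ genus k w) (D : ℤ) (d : V → ℤ) (hdeg : degA d Finset.univ = D)
    (hcon : ∀ A : Finset V, IsConnectedSubset k A → mA k w D A ≤ (degA d A : ℚ)) :
    IsBalanced k w D d :=
  stmt5_general V k w D d hdeg hcon
end
end

section
/- Let Γ be a connected multigraph with exactly s bridges. Then the quotient V² = V/≈ has exactly #V − s elements; consequently b₁(Γ²) = b₁(Γ), and for every weight function w on V the genus of the contracted weighted graph (Γ²,w²) equals the genus of (Γ,w). -/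
/-
The bridges of a connected multigraph form a forest: a bridge of `Γ` remains a bridge of every
subgraph containing it, so no cycle consists of bridges. The classes of `≈` are the connected
components of this forest, so there are `#V - s` of them. On the edge side, `Γ²` is obtained by
deleting the `s` bridges and then identifying the vertices of each class, and identifying vertices
along an arbitrary map does not change the number of edges. Hence `#E(Γ²) = #E - s`, and both
`b₁` and the genus are unchanged.
-/

open Finset

noncomputable section
open scoped Classical

variable {V : Type} [Fintype V] [DecidableEq V]

theorem even_sum_sum_erase_of_symm {α : Type*} [DecidableEq α] (A : Finset α)
    {f : α → α → ℕ} (hf : ∀ a b, f a b = f b a) : Even (∑ a ∈ A, ∑ b ∈ A.erase a, f a b) := by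
  induction A using Finset.induction_on with
  | empty => simp
  | @insert x A hx ih =>
    have hinner : ∀ a ∈ A, ∑ b ∈ (insert x A).erase a, f a b = f a x + ∑ b ∈ A.erase a, f a b := by
      intro a ha
      rw [Finset.erase_insert_of_ne (ne_of_mem_of_not_mem ha hx).symm,
        Finset.sum_insert (by simp [hx])]
    rw [Finset.sum_insert hx, Finset.erase_insert hx, Finset.sum_congr rfl hinner,
      Finset.sum_add_distrib, Finset.sum_congr rfl fun a _ => hf a x, ← add_assoc, ← two_mul]
    exact (even_two_mul _).add ih

namespace SimpleGraph

variable {α : Type*} {G : SimpleGraph α}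

theorem Connected.deleteEdges_singleton_of_reachable (hG : G.Connected) {a b : α}
    (h : (G.deleteEdges {s(a, b)}).Reachable a b) : (G.deleteEdges {s(a, b)}).Connected := by
  have hadj : ∀ ⦃x y⦄, G.Adj x y → (G.deleteEdges {s(a, b)}).Reachable x y := by
    intro x y hxy
    by_cases he : s(x, y) = s(a, b)
    · rcases Sym2.eq_iff.mp he with ⟨rfl, rfl⟩ | ⟨rfl, rfl⟩
      exacts [h, h.symm]
    · exact Adj.reachable (by simp [hxy, he])
  have := hG.nonempty
  refine ⟨fun x y => ?_⟩
  obtain ⟨p⟩ := hG.preconnected x y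
  induction p with
  | nil => rfl
  | cons hxz _ ih => exact (hadj hxz).trans ih

theorem IsAcyclic.card_edgeFinset_add_card_connectedComponent [Fintype α] [DecidableEq α]
    [DecidableRel G.Adj] [Fintype G.ConnectedComponent] (hG : G.IsAcyclic) :
    #G.edgeFinset + Fintype.card G.ConnectedComponent = Fintype.card α := by
  have htree (c : G.ConnectedComponent) : #c.toSimpleGraph.edgeFinset + 1 = Fintype.card c :=
    (hG.isTree_connectedComponent c).card_edgeFinset
  have hverts : ∑ c : G.ConnectedComponent, Fintype.card c = Fintype.card α := by
    rw [← Fintype.card_sigma]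
    exact Fintype.card_congr (Equiv.sigmaFiberEquiv G.connectedComponentMk)
  have hdarts : ∑ c : G.ConnectedComponent, Fintype.card c.toSimpleGraph.Dart =
      Fintype.card G.Dart := by
    rw [← Fintype.card_sigma]
    refine Fintype.card_congr ((Equiv.sigmaCongrRight fun c => ?_).trans
      (Equiv.sigmaFiberEquiv fun d : G.Dart => G.connectedComponentMk d.fst))
    exact
      { toFun d := ⟨c.toSimpleGraph_hom.mapDart d, d.fst.2⟩
        invFun d := ⟨(⟨d.1.fst, d.2⟩,
          ⟨d.1.snd, (ConnectedComponent.connectedComponentMk_eq_of_adj d.1.adj).symm.trans d.2⟩),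
          d.1.adj⟩
        left_inv _ := rfl
        right_inv _ := rfl }
  simp only [dart_card_eq_twice_card_edges, ← Finset.mul_sum] at hdarts
  rw [← hverts, ← Finset.sum_congr rfl fun c _ => htree c, Finset.sum_add_distrib]
  simp only [Finset.sum_const, Finset.card_univ, smul_eq_mul, mul_one]
  omega

end SimpleGraph

section Contraction

variable {W : Type} [DecidableEq W]

theorem two_mul_numEdges {k : V → V → ℕ} (hk : ∀ u v, k u v = k v u) :
    2 * numEdges k = 2 * ∑ v, k v v + ∑ u, ∑ v ∈ univ.erase u, k u v := by
  rw [numEdges, mul_add, Nat.mul_div_cancel' (even_sum_sum_erase_of_symm _ hk).two_dvd]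

theorem sum_sum_erase_eq_sum_fiberwise [Fintype W] {M : Type*} [AddCommMonoid M] (φ : V → W)
    (f : V → V → M) :
    ∑ u, ∑ v ∈ univ.erase u, f u v =
      ∑ c, ∑ u with φ u = c, ∑ v ∈ ({v | φ v = c} : Finset V).erase u, f u v +
        ∑ c, ∑ c' ∈ univ.erase c, ∑ u with φ u = c, ∑ v with φ v = c', f u v := by
  have hsplit : ∀ u, ∑ v ∈ univ.erase u, f u v =
      ∑ v ∈ ({v | φ v = φ u} : Finset V).erase u, f u v +
        ∑ c' ∈ univ.erase (φ u), ∑ v with φ v = c', f u v := by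
    intro u
    rw [← Finset.sum_fiberwise (univ.erase u) φ, ← Finset.add_sum_erase _ _ (mem_univ (φ u))]
    congr 1
    · rw [Finset.filter_erase]
    · refine Finset.sum_congr rfl fun c' hc' => Finset.sum_congr ?_ fun _ _ => rfl
      ext v
      simp only [Finset.mem_filter, Finset.mem_erase, Finset.mem_univ, and_true, true_and]
      exact ⟨fun h => h.2, fun h => ⟨by rintro rfl; exact (Finset.mem_erase.mp hc').1 h.symm, h⟩⟩
  rw [Finset.sum_congr rfl fun u _ => hsplit u, Finset.sum_add_distrib,
    ← Finset.sum_fiberwise univ φ, ← Finset.sum_fiberwise univ φ (fun u => ∑ c' ∈ univ.erase (φ u), _)]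
  congr 1
  · refine Finset.sum_congr rfl fun c _ => Finset.sum_congr rfl fun u hu => ?_
    rw [(Finset.mem_filter.mp hu).2]
  · refine Finset.sum_congr rfl fun c _ => ?_
    rw [Finset.sum_comm' (t' := univ.erase c) (s' := fun c' => ({u | φ u = c} : Finset V))]
    intro u c'
    simp +contextual

def contractAlong (φ : V → W) (k : V → V → ℕ) (c c' : W) : ℕ :=
  if c = c' then
    (∑ v with φ v = c, k v v) +
      (∑ u with φ u = c, ∑ v ∈ ({v | φ v = c} : Finset V).erase u, k u v) / 2
  else ∑ u with φ u = c, ∑ v with φ v = c', k u v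

theorem contractAlong_symm (φ : V → W) {k : V → V → ℕ} (hk : ∀ u v, k u v = k v u) (c c' : W) :
    contractAlong φ k c c' = contractAlong φ k c' c := by
  by_cases h : c = c'
  · rw [h]
  · rw [contractAlong, contractAlong, if_neg h, if_neg (Ne.symm h), Finset.sum_comm]
    simp only [hk]

theorem numEdges_contractAlong [Fintype W] (φ : V → W) {k : V → V → ℕ}
    (hk : ∀ u v, k u v = k v u) : numEdges (contractAlong φ k) = numEdges k := by
  have hloops : 2 * ∑ c, contractAlong φ k c c =
      2 * ∑ v, k v v + ∑ c, ∑ u with φ u = c, ∑ v ∈ ({v | φ v = c} : Finset V).erase u, k u v := by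
    simp only [contractAlong, if_pos, Finset.mul_sum, mul_add,
      Nat.mul_div_cancel' (even_sum_sum_erase_of_symm _ hk).two_dvd, Finset.sum_add_distrib,
      Finset.sum_fiberwise]
  have hcross : ∑ c, ∑ c' ∈ univ.erase c, contractAlong φ k c c' =
      ∑ c, ∑ c' ∈ univ.erase c, ∑ u with φ u = c, ∑ v with φ v = c', k u v :=
    Finset.sum_congr rfl fun c _ => Finset.sum_congr rfl fun c' hc' => by
      rw [contractAlong, if_neg (Finset.mem_erase.mp hc').1.symm]
  have hcontract := two_mul_numEdges (contractAlong_symm φ hk)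
  have horig := two_mul_numEdges hk
  rw [sum_sum_erase_eq_sum_fiberwise φ] at horig
  omega

end Contraction

section Bridges

variable {V : Type} [DecidableEq V]

theorem removeEdge_comm (k : V → V → ℕ) (a b : V) : removeEdge k a b = removeEdge k b a := by
  funext u v
  exact if_congr or_comm rfl rfl

theorem IsBridge.symm {k : V → V → ℕ} (hk : ∀ u v, k u v = k v u) {a b : V}
    (h : IsBridge k a b) : IsBridge k b a :=
  ⟨h.1.symm, (hk b a).trans h.2.1, by rw [removeEdge_comm]; exact h.2.2⟩

theorem graphOf_removeEdge (k : V → V → ℕ) (a b : V) :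
    graphOf (removeEdge k a b) = (graphOf k).deleteEdges {s(a, b)} := by
  ext u v
  simp only [graphOf, removeEdge, SimpleGraph.deleteEdges_adj, Set.mem_singleton_iff, Sym2.eq_iff]
  by_cases h : (u = a ∧ v = b) ∨ (u = b ∧ v = a)
  · have h' : (v = a ∧ u = b) ∨ (v = b ∧ u = a) := by tauto
    simp [h, h']
  · have h' : ¬((v = a ∧ u = b) ∨ (v = b ∧ u = a)) := by tauto
    simp [h, h']

theorem IsBridge.isBridge_graphOf {k : V → V → ℕ} (hconn : (graphOf k).Connected) {a b : V}
    (h : IsBridge k a b) : (graphOf k).IsBridge s(a, b) := fun hreach =>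
  h.2.2 (graphOf_removeEdge k a b ▸ hconn.deleteEdges_singleton_of_reachable hreach)

def bridgeGraph (k : V → V → ℕ) : SimpleGraph V where
  Adj u v := IsBridge k u v ∨ IsBridge k v u
  symm := ⟨fun _ _ => Or.symm⟩
  loopless := ⟨fun _ h => h.elim (fun h => h.1 rfl) (fun h => h.1 rfl)⟩

theorem bridgeGraph_le (k : V → V → ℕ) : bridgeGraph k ≤ graphOf k := by
  rintro u v (h | h)
  · exact ⟨h.1, Or.inl (h.2.1 ▸ Nat.one_pos)⟩
  · exact ⟨h.1.symm, Or.inr (h.2.1 ▸ Nat.one_pos)⟩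

theorem isAcyclic_bridgeGraph {k : V → V → ℕ} (hconn : (graphOf k).Connected) :
    (bridgeGraph k).IsAcyclic := by
  rw [SimpleGraph.isAcyclic_iff_forall_adj_isBridge]
  rintro u v (h | h)
  · exact (h.isBridge_graphOf hconn).anti (bridgeGraph_le k)
  · exact Sym2.eq_swap ▸ (h.isBridge_graphOf hconn).anti (bridgeGraph_le k)

theorem contractSetoid_iff_reachable (k : V → V → ℕ) (u v : V) :
    contractSetoid k u v ↔ (bridgeGraph k).Reachable u v := by
  constructor
  · intro h
    induction h with
    | rel _ _ h => exact SimpleGraph.Adj.reachable (Or.inl h)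
    | refl => rfl
    | symm _ _ _ ih => exact ih.symm
    | trans _ _ _ _ _ ih₁ ih₂ => exact ih₁.trans ih₂
  · rintro ⟨p⟩
    induction p with
    | nil => exact Relation.EqvGen.refl _
    | cons h _ ih =>
      refine Relation.EqvGen.trans _ _ _ ?_ ih
      exact h.elim (Relation.EqvGen.rel _ _)
        fun h => Relation.EqvGen.symm _ _ (Relation.EqvGen.rel _ _ h)

variable [Fintype V]

theorem card_V2_eq_card_connectedComponent (k : V → V → ℕ) :
    Fintype.card (V2 k) = Fintype.card (bridgeGraph k).ConnectedComponent :=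
  Fintype.card_congr (Quot.congrRight (contractSetoid_iff_reachable k))

theorem two_mul_card_edgeFinset_bridgeGraph {k : V → V → ℕ} (hk : ∀ u v, k u v = k v u) :
    2 * #(bridgeGraph k).edgeFinset = Fintype.card {p : V × V // IsBridge k p.1 p.2} := by
  rw [← SimpleGraph.dart_card_eq_twice_card_edges]
  exact Fintype.card_congr
    { toFun d := ⟨d.toProd, d.adj.elim id (IsBridge.symm hk)⟩
      invFun p := ⟨p.1, Or.inl p.2⟩
      left_inv _ := rfl
      right_inv _ := rfl }

theorem two_mul_card_V2_add_card_bridges {k : V → V → ℕ} (hk : ∀ u v, k u v = k v u)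
    (hconn : (graphOf k).Connected) :
    2 * Fintype.card (V2 k) + Fintype.card {p : V × V // IsBridge k p.1 p.2} =
      2 * Fintype.card V := by
  rw [card_V2_eq_card_connectedComponent, ← two_mul_card_edgeFinset_bridgeGraph hk,
    ← (isAcyclic_bridgeGraph hconn).card_edgeFinset_add_card_connectedComponent]
  ring

end Bridges

section RemoveBridges

variable {V : Type} [DecidableEq V]

def removeBridges (k : V → V → ℕ) (u v : V) : ℕ := if IsBridge k u v then 0 else k u v

theorem removeBridges_symm {k : V → V → ℕ} (hk : ∀ u v, k u v = k v u) (u v : V) :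
    removeBridges k u v = removeBridges k v u :=
  if_congr ⟨IsBridge.symm hk, IsBridge.symm hk⟩ rfl (hk u v)

theorem removeBridges_self (k : V → V → ℕ) (v : V) : removeBridges k v v = k v v :=
  if_neg fun h => h.1 rfl

theorem removeBridges_add_ite (k : V → V → ℕ) (u v : V) :
    removeBridges k u v + (if IsBridge k u v then 1 else 0) = k u v := by
  unfold removeBridges
  split_ifs with h
  exacts [h.2.1.symm, rfl]

variable [Fintype V]

theorem two_mul_numEdges_removeBridges_add {k : V → V → ℕ} (hk : ∀ u v, k u v = k v u) :
    2 * numEdges (removeBridges k) + Fintype.card {p : V × V // IsBridge k p.1 p.2} =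
      2 * numEdges k := by
  have hbridges : ∑ u, ∑ v ∈ univ.erase u, (if IsBridge k u v then 1 else 0) =
      Fintype.card {p : V × V // IsBridge k p.1 p.2} := by
    rw [Fintype.card_subtype, Finset.card_filter, Fintype.sum_prod_type]
    exact Finset.sum_congr rfl fun u _ => Finset.sum_erase _ (if_neg fun h => h.1 rfl)
  rw [two_mul_numEdges (removeBridges_symm hk), two_mul_numEdges hk, ← hbridges]
  simp only [removeBridges_self, add_assoc, ← Finset.sum_add_distrib, removeBridges_add_ite]

theorem k2_eq_contractAlong (k : V → V → ℕ) :
    k2 k = contractAlong (W := V2 k) (Quotient.mk _) (removeBridges k) := by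
  funext c c'
  unfold k2 contractAlong
  by_cases h : c = c'
  · subst h
    rw [if_pos rfl, if_pos rfl]
    simp only [removeBridges_self]
    rfl
  · rw [if_neg h, if_neg h]
    refine Finset.sum_congr rfl fun u hu => Finset.sum_congr rfl fun v hv =>
      (if_neg fun hb => h ?_).symm
    rw [← (Finset.mem_filter.mp hu).2, ← (Finset.mem_filter.mp hv).2]
    exact Quotient.sound (Relation.EqvGen.rel _ _ hb)

theorem sum_w2 (k : V → V → ℕ) (w : V → ℕ) : ∑ c, w2 k w c = ∑ v, w v :=
  Finset.sum_fiberwise univ _ w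

end RemoveBridges

/-- If a connected multigraph has exactly `s` bridges (so `2s`
ordered bridge pairs), then `V²` has `#V − s` elements, `b₁(Γ²) = b₁(Γ)` and
the genus of `(Γ²,w²)` equals the genus of `(Γ,w)` for every weight function. -/
theorem stmt6 (V : Type) [Fintype V] [DecidableEq V] (k : V → V → ℕ)
    (hsym : ∀ u v, k u v = k v u) (hconn : (graphOf k).Connected)
    (s : ℕ) (hs : Nat.card {p : V × V // IsBridge k p.1 p.2} = 2 * s) :
    Fintype.card (V2 k) = Fintype.card V - s ∧
    (numEdges (k2 k) : ℤ) - (Fintype.card (V2 k) : ℤ) + 1 =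
      (numEdges k : ℤ) - (Fintype.card V : ℤ) + 1 ∧
    ∀ w : V → ℕ, genus (k2 k) (w2 k w) = genus k w := by
  have hbridges : Fintype.card {p : V × V // IsBridge k p.1 p.2} = 2 * s := by
    rw [← Nat.card_eq_fintype_card, hs]
  have hV := two_mul_card_V2_add_card_bridges hsym hconn
  have hE : 2 * numEdges (k2 k) + 2 * s = 2 * numEdges k := by
    rw [k2_eq_contractAlong,
      numEdges_contractAlong (W := V2 k) (Quotient.mk _) (removeBridges_symm hsym), ← hbridges]
    exact two_mul_numEdges_removeBridges_add hsym
  refine ⟨by omega, by omega, fun w => ?_⟩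
  rw [genus, genus, ← Nat.cast_sum, ← Nat.cast_sum, sum_w2]
  omega

end
end
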